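/- Let A be an (α,β)-Frobenius extension of B with trace map tr. Then a map tr' : A → B is also a trace map for this extension if and only if there exists an invertible element a ∈ A commuting with every element of α(B) such that tr'(x) = tr(xa) for all x ∈ A. -/

import Mathlib

section

variable {A : Type u} [Ring A] (B : Subring A) (α : A ≃+* A) (β : B ≃+* B)

/-- A (left) trace map for an `(α,β)`-Frobenius extension: a `(B,B)`-bimodule map
`_β A_α → B` (i.e. `tr(β(b) x α(b')) = b tr(x) b'`) such that `tr(A a) = 0` forces
`a = 0`, and every left `B`-linear map `_β A → B` is `x ↦ tr(x a)` for some `a ∈ A`. -/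
def IsLeftTraceMap (tr : A →+ B) : Prop :=
  (∀ (b b' : B) (x : A), tr ((β b : A) * x * α (b' : A)) = b * tr x * b') ∧
  (∀ a : A, (∀ x : A, tr (x * a) = 0) → a = 0) ∧
  (∀ f : A →+ B, (∀ (b : B) (x : A), f ((β b : A) * x) = b * f x) →
    ∃ a : A, ∀ x : A, f x = tr (x * a))

section

variable {B α β} {tr tr' : A →+ B}

namespace IsLeftTraceMap

theorem map_beta_mul (h : IsLeftTraceMap B α β tr) (b : B) (x : A) :
    tr ((β b : A) * x) = b * tr x := by
  simpa using h.1 b 1 x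

theorem map_mul_alpha (h : IsLeftTraceMap B α β tr) (b : B) (x : A) :
    tr (x * α (b : A)) = tr x * b := by
  simpa using h.1 1 b x

theorem eq_of_forall_map_mul_eq (h : IsLeftTraceMap B α β tr) {a a' : A}
    (H : ∀ x, tr (x * a) = tr (x * a')) : a = a' :=
  sub_eq_zero.mp <| h.2.1 _ fun x => by rw [mul_sub, map_sub, H, sub_self]

theorem exists_eq_map_mul (h : IsLeftTraceMap B α β tr) (h' : IsLeftTraceMap B α β tr') :
    ∃ a : A, ∀ x, tr' x = tr (x * a) :=
  h.2.2 tr' h'.map_beta_mul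

theorem mul_eq_one_of_map_mul {a c : A} (h : IsLeftTraceMap B α β tr)
    (ha : ∀ x, tr' x = tr (x * a)) (hc : ∀ x, tr x = tr' (x * c)) : c * a = 1 :=
  h.eq_of_forall_map_mul_eq fun x => by rw [← mul_assoc, ← ha, ← hc, mul_one]

theorem mul_alpha_comm_of_map_mul {a : A} (h : IsLeftTraceMap B α β tr)
    (h' : IsLeftTraceMap B α β tr') (ha : ∀ x, tr' x = tr (x * a)) (b : B) :
    a * α (b : A) = α (b : A) * a :=
  h.eq_of_forall_map_mul_eq fun x => by
    rw [← mul_assoc, h.map_mul_alpha, ← ha, ← mul_assoc, ← ha, h'.map_mul_alpha]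

theorem of_map_mul_unit {a : A} (h : IsLeftTraceMap B α β tr) (hunit : IsUnit a)
    (hcomm : ∀ b : B, a * α (b : A) = α (b : A) * a) (ha : ∀ x, tr' x = tr (x * a)) :
    IsLeftTraceMap B α β tr' := by
  obtain ⟨u, rfl⟩ := hunit
  refine ⟨fun b b' x => ?_, fun z hz => ?_, fun f hf => ?_⟩
  · rw [ha, mul_assoc _ _ (u : A), ← hcomm, ← mul_assoc, mul_assoc _ x, h.1, ← ha]
  · have : z * u = 0 := h.2.1 _ fun x => by rw [← mul_assoc, ← ha, hz]
    simpa using congrArg (· * (↑u⁻¹ : A)) this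
  · obtain ⟨d, hd⟩ := h.2.2 f hf
    exact ⟨d * ↑u⁻¹, fun x => by rw [hd, ha, mul_assoc x, Units.inv_mul_cancel_right]⟩

end IsLeftTraceMap

end

theorem isLeftTraceMap_iff_mul_unit
    (tr : A →+ B) (htr : IsLeftTraceMap B α β tr) (tr' : A →+ B) :
    IsLeftTraceMap B α β tr' ↔
      ∃ a : A, IsUnit a ∧ (∀ b : B, a * α (b : A) = α (b : A) * a) ∧
        ∀ x : A, tr' x = tr (x * a) := by
  constructor
  · intro htr'
    obtain ⟨a, ha⟩ := htr.exists_eq_map_mul htr'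
    obtain ⟨c, hc⟩ := htr'.exists_eq_map_mul htr
    have hunit : IsUnit a :=
      ⟨⟨a, c, htr'.mul_eq_one_of_map_mul hc ha, htr.mul_eq_one_of_map_mul ha hc⟩, rfl⟩
    exact ⟨a, hunit, htr.mul_alpha_comm_of_map_mul htr' ha, ha⟩
  · rintro ⟨a, hunit, hcomm, ha⟩
    exact htr.of_map_mul_unit hunit hcomm ha

end
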